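/- Let n ≥ 1 be an integer, m₂ ∈ ℝ, l > 0 and δ ≥ 1 with δ > n(m₂+l)/(n+1). Define σ₃(k) = δ(k+m₂+l-1)/(k-1+δ) and θ₃(k) = ((k-1+δ)/δ - (k-1+δ)/(δ(k+m₂+l-1))) / ((k-1+δ)/δ - 1/δ + 1/n). Then there exists k* > 1 such that for all k > k*, 0 < σ₃(k)θ₃(k)/δ < 1. -/
import Mathlib


set_option maxHeartbeats 1000000 in
theorem sigma3_theta3_div_delta_mem_Ioo (n : ℕ) (hn : 1 ≤ n) (m₂ l δ : ℝ)
    (hl : 0 < l) (hδ : 1 ≤ δ) (hδm : (n : ℝ) * (m₂ + l) / ((n : ℝ) + 1) < δ) :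
    ∃ kstar : ℝ, 1 < kstar ∧ ∀ k : ℝ, kstar < k →
      0 < (δ * (k + m₂ + l - 1) / (k - 1 + δ)) *
            (((k - 1 + δ) / δ - (k - 1 + δ) / (δ * (k + m₂ + l - 1))) /
              ((k - 1 + δ) / δ - 1 / δ + 1 / (n : ℝ))) / δ ∧
      (δ * (k + m₂ + l - 1) / (k - 1 + δ)) *
            (((k - 1 + δ) / δ - (k - 1 + δ) / (δ * (k + m₂ + l - 1))) /
              ((k - 1 + δ) / δ - 1 / δ + 1 / (n : ℝ))) / δ < 1 := by
  have hn0 : (0 : ℝ) < n := by exact_mod_cast hn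
  have hδ0 : (0 : ℝ) < δ := lt_of_lt_of_le one_pos hδ
  refine ⟨max 2 (3 - (m₂ + l)), lt_of_lt_of_le one_lt_two (le_max_left _ _), ?_⟩
  intro k hk
  have hk2 : (2 : ℝ) < k := lt_of_le_of_lt (le_max_left _ _) hk
  have hA : 1 < k + m₂ + l - 1 := by
    have := lt_of_le_of_lt (le_max_right 2 (3 - (m₂ + l))) hk
    linarith
  have hA0 : (0 : ℝ) < k + m₂ + l - 1 := by linarith
  have hB0 : (0 : ℝ) < k - 1 + δ := by linarith
  have hD0 : (0 : ℝ) < (k - 1 + δ) / δ - 1 / δ + 1 / n := by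
    have h1 : (0 : ℝ) < (k - 2 + δ) / δ := div_pos (by linarith) hδ0
    have h2 : (0 : ℝ) < 1 / (n : ℝ) := by positivity
    have : (k - 1 + δ) / δ - 1 / δ = (k - 2 + δ) / δ := by ring
    rw [this]; linarith
  have hδne : δ ≠ 0 := hδ0.ne'
  have hAne : k + m₂ + l - 1 ≠ 0 := hA0.ne'
  have hBne : k - 1 + δ ≠ 0 := hB0.ne'
  have hDne : (k - 1 + δ) / δ - 1 / δ + 1 / (n : ℝ) ≠ 0 := hD0.ne'
  have hnne : (n : ℝ) ≠ 0 := hn0.ne'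
  set D : ℝ := (k - 1 + δ) / δ - 1 / δ + 1 / (n : ℝ) with hDdef
  have hE : (δ * (k + m₂ + l - 1) / (k - 1 + δ)) *
            (((k - 1 + δ) / δ - (k - 1 + δ) / (δ * (k + m₂ + l - 1))) / D) / δ
      = (k + m₂ + l - 2) / (δ * D) := by
    field_simp
    ring
  have hδD : δ * D = k - 2 + δ + δ / n := by
    rw [hDdef]
    field_simp
    ring
  rw [hE, hδD]
  have hden : (0 : ℝ) < k - 2 + δ + δ / n := by
    have : (0 : ℝ) < δ / n := by positivity
    linarith
  constructor
  · exact div_pos (by linarith) hden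
  · rw [div_lt_one hden]
    have key : (n : ℝ) * (m₂ + l) < δ * ((n : ℝ) + 1) := by
      rw [div_lt_iff₀ (by positivity : (0:ℝ) < (n:ℝ) + 1)] at hδm
      linarith
    have h2 : δ + δ / n = δ * ((n : ℝ) + 1) / n := by
      field_simp
    have h3 : m₂ + l < δ + δ / n := by
      rw [h2, lt_div_iff₀ hn0]
      nlinarith [key]
    linarith
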